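/- arXiv:1203.3032 — 5 statements merged into one kernel-verified Lean document; each statement's English description precedes it below -/
import Mathlib

section
/- There exists a semisimple module over a commutative ring that is essentially critically compressible but not critically compressible. -/
/-- `N` is an essential submodule of `M`: it intersects every nonzero submodule nontrivially. -/
def IsEssential (R M : Type*) [Ring R] [AddCommGroup M] [Module R M]
    (N : Submodule R M) : Prop :=
  ∀ L : Submodule R M, L ≠ ⊥ → N ⊓ L ≠ ⊥

/-- `M` is compressible: it embeds in every nonzero submodule. -/
def Compressible (R M : Type*) [Ring R] [AddCommGroup M] [Module R M] : Prop :=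
  ∀ N : Submodule R M, N ≠ ⊥ → ∃ f : M →ₗ[R] N, Function.Injective f

/-- `M` is critically compressible. -/
def CritComp (R M : Type*) [Ring R] [AddCommGroup M] [Module R M] : Prop :=
  Compressible R M ∧
    ∀ N : Submodule R M, N ≠ ⊥ → ¬ ∃ f : M →ₗ[R] (M ⧸ N), Function.Injective f

/-- `M` is essentially compressible: it embeds in every essential submodule. -/
def EssComp (R M : Type*) [Ring R] [AddCommGroup M] [Module R M] : Prop :=
  ∀ N : Submodule R M, IsEssential R M N → ∃ f : M →ₗ[R] N, Function.Injective f

/-- `M` is essentially critically compressible. -/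
def EssCritComp (R M : Type*) [Ring R] [AddCommGroup M] [Module R M] : Prop :=
  EssComp R M ∧
    ∀ N : Submodule R M, N ≠ ⊥ → IsEssential R M N →
      ¬ ∃ f : M →ₗ[R] (M ⧸ N), Function.Injective f

/-- `M` is essentially retractable: `Hom(M, N) ≠ 0` for every essential `N`. -/
def EssRetractable (R M : Type*) [Ring R] [AddCommGroup M] [Module R M] : Prop :=
  ∀ N : Submodule R M, IsEssential R M N → ∃ f : M →ₗ[R] N, f ≠ 0

/-- `M` is uniform: every nonzero submodule is essential. -/
def Uniform (R M : Type*) [Ring R] [AddCommGroup M] [Module R M] : Prop :=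
  ∀ N : Submodule R M, N ≠ ⊥ → IsEssential R M N

/-- `M` is polyform: no nonzero homomorphism from an essential submodule of `M`
to `M` has essential kernel. -/
def Polyform (R M : Type*) [Ring R] [AddCommGroup M] [Module R M] : Prop :=
  ∀ N : Submodule R M, IsEssential R M N → ∀ f : N →ₗ[R] M, f ≠ 0 →
    ¬ IsEssential R N (LinearMap.ker f)

/-- `M` is essentially fully retractable. -/
def EssFullyRetractable (R M : Type*) [Ring R] [AddCommGroup M] [Module R M] : Prop :=
  ∀ N : Submodule R M, N ≠ ⊥ → IsEssential R M N → ∀ f : N →ₗ[R] M, f ≠ 0 →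
    ∃ g : M →ₗ[R] N, g ∘ₗ f ≠ 0

/-- `M` is self-similar: nonzero, and every nonzero submodule is isomorphic to `M`. -/
def SelfSimilar (R M : Type*) [Ring R] [AddCommGroup M] [Module R M] : Prop :=
  (∃ x : M, x ≠ 0) ∧ ∀ N : Submodule R M, N ≠ ⊥ → Nonempty (N ≃ₗ[R] M)

/-!
In a semisimple module every submodule has a complement, so the only essential submodule is the
module itself; this makes every semisimple module essentially critically compressible.
Compressibility fails for `(ZMod 2)²`: an embedding of an Artinian module into one of its
submodules is an injective endomorphism, hence surjective, so it cannot land in the proper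
nonzero submodule `ZMod 2 × 0`.
-/

section

variable {R M : Type*} [Ring R] [AddCommGroup M] [Module R M]

theorem IsEssential.eq_top [IsSemisimpleModule R M] {N : Submodule R M}
    (h : IsEssential R M N) : N = ⊤ := by
  obtain ⟨L, hL⟩ := exists_isCompl N
  have hL0 : L = ⊥ := by
    by_contra hL0
    exact h L hL0 hL.inf_eq_bot
  rw [← hL.sup_eq_top, hL0, sup_bot_eq]

theorem essCritComp_of_isSemisimpleModule [IsSemisimpleModule R M] : EssCritComp R M := by
  refine ⟨fun N hN => ?_, fun N hN0 hN ⟨f, hf⟩ => ?_⟩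
  · obtain rfl := hN.eq_top
    exact ⟨Submodule.topEquiv.symm.toLinearMap, Submodule.topEquiv.symm.injective⟩
  · obtain rfl := hN.eq_top
    have : Subsingleton M := hf.subsingleton
    exact hN0 (Subsingleton.elim _ _)

theorem not_compressible_of_isArtinian [IsArtinian R M] {N : Submodule R M} (hN0 : N ≠ ⊥)
    (hNtop : N ≠ ⊤) : ¬ Compressible R M := by
  intro hc
  obtain ⟨f, hf⟩ := hc N hN0
  have hsurj := IsArtinian.surjective_of_injective_endomorphism (N.subtype ∘ₗ f)
    (N.injective_subtype.comp hf)
  refine hNtop (eq_top_iff.mpr fun x _ => ?_)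
  obtain ⟨y, rfl⟩ := hsurj x
  exact (f y).2

end

theorem stmt2 : ∃ (R : Type) (_ : CommRing R) (M : Type) (_ : AddCommGroup M)
    (_ : Module R M), IsSemisimpleModule R M ∧ EssCritComp R M ∧ ¬ CritComp R M := by
  let N := LinearMap.ker (LinearMap.snd (ZMod 2) (ZMod 2) (ZMod 2))
  have hN0 : N ≠ ⊥ := fun h => by
    have : ((1, 0) : ZMod 2 × ZMod 2) ∈ N := rfl
    simp [h] at this
  have hNtop : N ≠ ⊤ := fun h => by
    have : ((0, 1) : ZMod 2 × ZMod 2) ∈ N := h ▸ Submodule.mem_top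
    simp [N] at this
  exact ⟨ZMod 2, inferInstance, ZMod 2 × ZMod 2, inferInstance, inferInstance, inferInstance,
    essCritComp_of_isSemisimpleModule, fun h => not_compressible_of_isArtinian hN0 hNtop h.1⟩
end

section
/- Every nonzero essential submodule of an essentially compressible module is essentially compressible. -/
theorem IsEssential.map_subtype {R M : Type*} [Ring R] [AddCommGroup M] [Module R M]
    {N : Submodule R M} {K : Submodule R N} (hN : IsEssential R M N) (hK : IsEssential R N K) :
    IsEssential R M (K.map N.subtype) := by
  intro L hL
  have hLN : L.comap N.subtype ≠ ⊥ := by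
    rw [Ne, ← Submodule.disjoint_iff_comap_eq_bot, disjoint_iff]
    exact hN L hL
  have hKL : (K ⊓ L.comap N.subtype).map N.subtype ≠ ⊥ := by
    rw [Ne, ← Submodule.map_bot N.subtype]
    exact (Submodule.map_injective_of_injective N.injective_subtype).ne (hK _ hLN)
  refine ne_bot_of_le_ne_bot hKL ?_
  calc (K ⊓ L.comap N.subtype).map N.subtype
      ≤ K.map N.subtype ⊓ (L.comap N.subtype).map N.subtype := Submodule.map_inf_le _
    _ ≤ K.map N.subtype ⊓ L := inf_le_inf_left _ (Submodule.map_comap_le _ _)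

theorem stmt3_general (R M : Type*) [Ring R] [AddCommGroup M] [Module R M]
    (h : EssComp R M) (N : Submodule R M) (hNe : IsEssential R M N) :
    EssComp R N := by
  intro K hK
  obtain ⟨f, hf⟩ := h _ (hNe.map_subtype hK)
  let e := Submodule.equivMapOfInjective N.subtype N.injective_subtype K
  exact ⟨e.symm.toLinearMap ∘ₗ f ∘ₗ N.subtype, e.symm.injective.comp (hf.comp N.injective_subtype)⟩

theorem stmt3 (R M : Type*) [Ring R] [AddCommGroup M] [Module R M]
    (h : EssComp R M) (N : Submodule R M) (hN0 : N ≠ ⊥) (hNe : IsEssential R M N) :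
    EssComp R N :=
  stmt3_general R M h N hNe
end

section
/- Every nonzero essential submodule of an essentially critically compressible module is essentially critically compressible. -/
section

variable {R M : Type*} [Ring R] [AddCommGroup M] [Module R M]

lemma Submodule.map_ne_bot_of_injective {M' : Type*} [AddCommGroup M'] [Module R M']
    {f : M →ₗ[R] M'} (hf : Function.Injective f) {L : Submodule R M} (hL : L ≠ ⊥) :
    L.map f ≠ ⊥ := by
  rwa [← Submodule.map_bot f, (Submodule.map_injective_of_injective hf).ne_iff]

lemma Submodule.mapQ_map_injective {M' : Type*} [AddCommGroup M'] [Module R M']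
    {f : M →ₗ[R] M'} (hf : Function.Injective f) (L : Submodule R M) :
    Function.Injective (L.mapQ (L.map f) f (Submodule.le_comap_map f L)) := by
  rw [← LinearMap.ker_eq_bot, Submodule.ker_mapQ, Submodule.comap_map_eq_of_injective hf,
    Submodule.mkQ_map_self]

lemma IsEssential.map_subtype_s4 {N : Submodule R M} (hN : IsEssential R M N)
    {L : Submodule R N} (hL : IsEssential R N L) : IsEssential R M (L.map N.subtype) := by
  intro K hK
  have hKN : K.comap N.subtype ≠ ⊥ := by
    intro hbot
    apply hN K hK
    rw [← Submodule.map_comap_subtype, hbot, Submodule.map_bot]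
  have hLK := Submodule.map_ne_bot_of_injective N.injective_subtype (hL _ hKN)
  rwa [Submodule.map_inf _ N.injective_subtype, Submodule.map_comap_subtype,
    ← inf_assoc, inf_of_le_left (Submodule.map_subtype_le N L)] at hLK

lemma EssComp.of_isEssential {N : Submodule R M} (h : EssComp R M) (hN : IsEssential R M N) :
    EssComp R N := by
  intro L hL
  obtain ⟨f, hf⟩ := h _ (hN.map_subtype_s4 hL)
  let e := Submodule.equivMapOfInjective N.subtype N.injective_subtype L
  exact ⟨e.symm.toLinearMap ∘ₗ f ∘ₗ N.subtype,
    e.symm.injective.comp (hf.comp N.injective_subtype)⟩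

end

theorem stmt4_general (R M : Type*) [Ring R] [AddCommGroup M] [Module R M]
    (h : EssCritComp R M) (N : Submodule R M) (hNe : IsEssential R M N) :
    EssCritComp R N := by
  refine ⟨h.1.of_isEssential hNe, ?_⟩
  rintro L hL0 hL ⟨f, hf⟩
  obtain ⟨g, hg⟩ := h.1 N hNe
  -- `M ↪ N ↪ N ⧸ L ↪ M ⧸ L`, where `L` is viewed as an essential submodule of `M`
  exact h.2 _ (Submodule.map_ne_bot_of_injective N.injective_subtype hL0) (hNe.map_subtype_s4 hL)
    ⟨L.mapQ _ N.subtype (Submodule.le_comap_map _ L) ∘ₗ f ∘ₗ g,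
      (Submodule.mapQ_map_injective N.injective_subtype L).comp (hf.comp hg)⟩

theorem stmt4 (R M : Type*) [Ring R] [AddCommGroup M] [Module R M]
    (h : EssCritComp R M) (N : Submodule R M) (hN0 : N ≠ ⊥) (hNe : IsEssential R M N) :
    EssCritComp R N :=
  stmt4_general R M h N hNe
end

section
/- Let M be an essentially retractable uniform module whose endomorphism ring is a domain. Then M is essentially critically compressible if and only if M is polyform. -/
/-!
If `f : N → M` has essential kernel `L`, then `L` is a nonzero submodule of the uniform module `M`,
hence essential, and `M ↪ f(N) ≅ N/L ↪ M/L`; so essential critical compressibility rules out `f`.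
Conversely, an embedding `g : M ↪ M/K` yields the map `g⁻¹ ∘ π` from the essential submodule
`π⁻¹(g(M))` onto `M`, whose kernel `K` is essential, against polyformity. Essential compressibility
comes from essential retractability: if a nonzero endomorphism `φ` had nonzero, hence essential,
kernel, a nonzero `ψ : M → ker φ` would give `φ ψ = 0` in the domain `End(M)`.
-/

open Function LinearMap Submodule

section

variable {R M : Type*} [Ring R] [AddCommGroup M] [Module R M]

theorem IsEssential.ne_bot [Nontrivial M] {N : Submodule R M} (hN : IsEssential R M N) :
    N ≠ ⊥ := by
  simpa using hN ⊤ top_ne_bot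

theorem IsEssential.mono {P Q : Submodule R M} (hPQ : P ≤ Q) (hP : IsEssential R M P) :
    IsEssential R M Q :=
  fun L hL => ne_bot_of_le_ne_bot (hP L hL) (inf_le_inf_right L hPQ)

theorem Submodule.map_subtype_eq_bot_iff (D : Submodule R M) {L : Submodule R D} :
    L.map D.subtype = ⊥ ↔ L = ⊥ := by
  rw [← map_bot D.subtype, (map_injective_of_injective D.injective_subtype).eq_iff]

theorem IsEssential.comap_subtype {K : Submodule R M} (hK : IsEssential R M K)
    (D : Submodule R M) : IsEssential R D (K.comap D.subtype) := by
  intro L hL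
  obtain ⟨x, ⟨hxK, hxL⟩, hx0⟩ :=
    (Submodule.ne_bot_iff _).mp (hK _ (mt (map_subtype_eq_bot_iff D).mp hL))
  obtain ⟨y, hyL, rfl⟩ := Submodule.mem_map.mp hxL
  exact (Submodule.ne_bot_iff _).mpr ⟨y, ⟨hxK, hyL⟩, fun h => hx0 (by simp [h])⟩

theorem Submodule.injective_mapQ_subtype (N : Submodule R M) (P : Submodule R N) :
    Injective (P.mapQ (P.map N.subtype) N.subtype (le_comap_map _ _)) := by
  rw [← ker_eq_bot, ker_mapQ, comap_map_eq_of_injective N.injective_subtype, mkQ_map_self]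

theorem Submodule.subtype_comp_eq_zero_iff {P : Type*} [AddCommGroup P] [Module R P]
    {N : Submodule R M} {f : P →ₗ[R] N} : N.subtype ∘ₗ f = 0 ↔ f = 0 :=
  ⟨fun h => by ext x; simpa using congr($h x), fun h => by simp [h]⟩

theorem EssRetractable.not_isEssential_ker [NoZeroDivisors (Module.End R M)]
    (hret : EssRetractable R M) {φ : Module.End R M} (hφ : φ ≠ 0) :
    ¬ IsEssential R M (ker φ) := by
  intro hker
  obtain ⟨ψ, hψ⟩ := hret _ hker
  have hψ' : (ker φ).subtype ∘ₗ ψ ≠ 0 := by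
    rwa [Ne, subtype_comp_eq_zero_iff]
  have hφψ : φ * ((ker φ).subtype ∘ₗ ψ) = 0 := by
    ext x
    exact mem_ker.mp (ψ x).2
  exact mul_ne_zero hφ hψ' hφψ

theorem EssRetractable.injective_of_ne_zero [NoZeroDivisors (Module.End R M)]
    (hret : EssRetractable R M) (hunif : Uniform R M) {φ : Module.End R M} (hφ : φ ≠ 0) :
    Injective φ := by
  rw [← ker_eq_bot]
  by_contra hker
  exact hret.not_isEssential_ker hφ (hunif _ hker)

theorem EssRetractable.essComp [NoZeroDivisors (Module.End R M)]
    (hret : EssRetractable R M) (hunif : Uniform R M) : EssComp R M := by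
  intro N hN
  obtain ⟨f, hf⟩ := hret N hN
  have hf' : N.subtype ∘ₗ f ≠ 0 := by
    rwa [Ne, subtype_comp_eq_zero_iff]
  have hinj := hret.injective_of_ne_zero hunif hf'
  rw [coe_comp] at hinj
  exact ⟨f, hinj.of_comp⟩

theorem Polyform.not_injective_to_quotient (hp : Polyform R M) {K : Submodule R M}
    (hK : IsEssential R M K) (hK0 : K ≠ ⊥) (g : M →ₗ[R] M ⧸ K) : ¬ Injective g := by
  intro hg
  set D := (range g).comap K.mkQ
  have hKD : K ≤ D := fun x hx => by simp [D, (Quotient.mk_eq_zero K).mpr hx]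
  set p : D →ₗ[R] range g := K.mkQ.restrict fun _ hx => hx
  set φ : D →ₗ[R] M := (LinearEquiv.ofInjective g hg).symm.toLinearMap ∘ₗ p
  have hker : ker φ = K.comap D.subtype := by
    rw [LinearEquiv.ker_comp, ker_restrict, ker_mkQ]
  obtain ⟨k, -, hk0⟩ := (Submodule.ne_bot_iff _).mp hK0
  have hφ : φ ≠ 0 := by
    obtain ⟨m, hm⟩ := K.mkQ_surjective (g k)
    have hmk : φ ⟨m, k, hm.symm⟩ = k :=
      (LinearEquiv.ofInjective g hg).symm_apply_eq.mpr (Subtype.ext hm)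
    exact DFunLike.ne_iff.mpr ⟨_, hmk ▸ hk0⟩
  exact hp D (hK.mono hKD) φ hφ (hker ▸ hK.comap_subtype D)

theorem EssCritComp.polyform (hunif : Uniform R M) (hc : EssCritComp R M) : Polyform R M := by
  intro N hN f hf hker
  have : Nontrivial N := by
    obtain ⟨n, hn⟩ := DFunLike.ne_iff.mp hf
    exact nontrivial_of_ne n 0 (by rintro rfl; simp at hn)
  set K := (ker f).map N.subtype
  have hK : K ≠ ⊥ := mt (map_subtype_eq_bot_iff N).mp hker.ne_bot
  obtain ⟨u, hu⟩ := hc.1 _ (hunif _ (mt range_eq_bot.mp hf))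
  set v := (ker f).mapQ K N.subtype (le_comap_map _ _) ∘ₗ f.quotKerEquivRange.symm.toLinearMap
  exact hc.2 K hK (hunif K hK) ⟨v ∘ₗ u, ((N.injective_mapQ_subtype _).comp
    f.quotKerEquivRange.symm.injective).comp hu⟩

theorem Polyform.essCritComp [NoZeroDivisors (Module.End R M)] (hret : EssRetractable R M)
    (hunif : Uniform R M) (hp : Polyform R M) : EssCritComp R M :=
  ⟨hret.essComp hunif, fun _ hK0 hK ⟨g, hg⟩ => hp.not_injective_to_quotient hK hK0 g hg⟩

end

theorem stmt15 (R M : Type*) [Ring R] [AddCommGroup M] [Module R M]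
    (h1 : EssRetractable R M) (h2 : Uniform R M) (h3 : IsDomain (Module.End R M)) :
    EssCritComp R M ↔ Polyform R M :=
  have := h3
  ⟨EssCritComp.polyform h2, Polyform.essCritComp h1 h2⟩
end

section
/- Let M be a polyform uniform module that is essentially retractable. Then M is essentially fully retractable. -/
/-! A polyform uniform module is monoform: a nonzero map from an essential submodule has a kernel that is
not essential, hence zero by uniformity. So every nonzero `g : M → N` given by essential
retractability is injective, and `g ∘ f ≠ 0` for every nonzero `f`. -/

section

variable {R M : Type*} [Ring R] [AddCommGroup M] [Module R M]

theorem isEssential_top : IsEssential R M ⊤ :=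
  fun L hL => by simpa using hL

theorem Uniform.submodule (h : Uniform R M) (N : Submodule R M) : Uniform R N := by
  intro K hK L hL hKL
  have hmap : ∀ P : Submodule R N, P ≠ ⊥ → P.map N.subtype ≠ ⊥ := fun P hP => by
    rw [← Submodule.map_bot N.subtype]
    exact (Submodule.map_injective_of_injective N.injective_subtype).ne hP
  apply h _ (hmap K hK) _ (hmap L hL)
  rw [← Submodule.map_inf _ N.injective_subtype, hKL, Submodule.map_bot]

theorem Polyform.injective_of_uniform (hp : Polyform R M) (hu : Uniform R M)
    {N : Submodule R M} (hN : IsEssential R M N) {f : N →ₗ[R] M} (hf : f ≠ 0) :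
    Function.Injective f := by
  rw [← LinearMap.ker_eq_bot]
  by_contra hker
  exact hp N hN f hf (hu.submodule N _ hker)

theorem Polyform.injective_endomorphism (hp : Polyform R M) (hu : Uniform R M)
    {f : M →ₗ[R] M} (hf : f ≠ 0) : Function.Injective f := by
  let e : (⊤ : Submodule R M) ≃ₗ[R] M := Submodule.topEquiv
  have hfe : f ∘ₗ e.toLinearMap ≠ 0 := fun h => hf <| by
    simpa [LinearMap.comp_assoc] using congrArg (· ∘ₗ e.symm.toLinearMap) h
  exact (EquivLike.injective_comp e f).mp (hp.injective_of_uniform hu isEssential_top hfe)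

theorem Polyform.injective_to_submodule (hp : Polyform R M) (hu : Uniform R M)
    {N : Submodule R M} {g : M →ₗ[R] N} (hg : g ≠ 0) : Function.Injective g := by
  have hg' : N.subtype ∘ₗ g ≠ 0 := fun h =>
    hg (LinearMap.ext fun x => Subtype.ext (LinearMap.congr_fun h x))
  have hinj := hp.injective_endomorphism hu hg'
  rw [LinearMap.coe_comp] at hinj
  exact hinj.of_comp

end

theorem stmt19 (R M : Type*) [Ring R] [AddCommGroup M] [Module R M]
    (h1 : Polyform R M) (h2 : Uniform R M) (h3 : EssRetractable R M) :
    EssFullyRetractable R M := by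
  intro N _ hN f hf
  obtain ⟨g, hg⟩ := h3 N hN
  have hg_inj : Function.Injective g := h1.injective_to_submodule h2 hg
  refine ⟨g, fun hgf => hf (LinearMap.ext fun x => ?_)⟩
  exact (hg_inj.eq_iff' g.map_zero).mp (LinearMap.congr_fun hgf x)
end
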